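/- Let (L, Q_1, …, Q_n, R) be a (4,c)-flexipath with n ≥ 2. Then ⊓(L,R) + ⊓*(L,R) ≤ 5 − c. -/

import Mathlib

open Set

namespace Matroid

variable {α : Type*}

/-- The rank of a set in a matroid: the supremum of the cardinalities of its
independent subsets. -/
noncomputable def rFun (M : Matroid α) (X : Set α) : ℕ :=
  sSup {n | ∃ I ⊆ X, M.Indep I ∧ I.ncard = n}

/-- The connectivity function λ of a matroid. -/
noncomputable def conn (M : Matroid α) (A : Set α) : ℤ :=
  (M.rFun A : ℤ) + M.rFun (M.E \ A) - M.rFun M.E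

/-- The local connectivity ⊓(X,Y) = r(X) + r(Y) - r(X ∪ Y). -/
noncomputable def localConn (M : Matroid α) (X Y : Set α) : ℤ :=
  (M.rFun X : ℤ) + M.rFun Y - M.rFun (X ∪ Y)

/-- The local coconnectivity ⊓*(X,Y): the local connectivity in the dual matroid. -/
noncomputable def localCoconn (M : Matroid α) (X Y : Set α) : ℤ :=
  M✶.localConn X Y

/-- `(L, Q 0, ..., Q (n-1), R)` is a path of 4-separations in `M`: it is an ordered
partition of the ground set, κ(L,R) = 3 (the minimum of λ over sets sandwiched between
`L` and `E \ R` is 3; since λ(L) = 3 is among the `steps` conditions, it suffices to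
require that 3 is a lower bound), and every initial union is exactly 3-separating. -/
structure Is4Path (M : Matroid α) (L R : Set α) {n : ℕ} (Q : Fin n → Set α) : Prop where
  ground_eq : L ∪ (⋃ i, Q i) ∪ R = M.E
  disj_LR : Disjoint L R
  disj_LQ : ∀ i, Disjoint L (Q i)
  disj_RQ : ∀ i, Disjoint R (Q i)
  disj_QQ : ∀ i j, i ≠ j → Disjoint (Q i) (Q j)
  nonempty_L : L.Nonempty
  nonempty_R : R.Nonempty
  nonempty_Q : ∀ i, (Q i).Nonempty
  kappa_ge : ∀ Z, L ⊆ Z → Z ⊆ M.E \ R → 3 ≤ M.conn Z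
  steps : ∀ k ≤ n, M.conn (L ∪ ⋃ i ∈ {i : Fin n | (i : ℕ) < k}, Q i) = 3

/-- A 4-flexipath: every permutation of the internal steps yields a path of
4-separations. -/
def Is4Flexipath (M : Matroid α) (L R : Set α) {n : ℕ} (Q : Fin n → Set α) : Prop :=
  ∀ σ : Equiv.Perm (Fin n), Is4Path M L R (Q ∘ σ)

/-- A `(4,c)`-flexipath: a 4-flexipath with λ(Q i) = c for all `i` and
λ(Q i ∪ Q j) > c for all distinct `i`, `j`. -/
structure Is4cFlexipath (M : Matroid α) (c : ℤ) (L R : Set α) {n : ℕ}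
    (Q : Fin n → Set α) : Prop where
  flexi : Is4Flexipath M L R Q
  conn_step : ∀ i, M.conn (Q i) = c
  conn_two_steps : ∀ i j, i ≠ j → c < M.conn (Q i ∪ Q j)


section Aux

variable {M : Matroid α} {I J X A B : Set α}

lemma ncard_le_rFun (M : Matroid α) [M.Finite] (hI : M.Indep I) (hIX : I ⊆ X) :
    I.ncard ≤ M.rFun X := by
  have hbdd : BddAbove {n | ∃ I ⊆ X, M.Indep I ∧ I.ncard = n} := by
    refine ⟨M.E.ncard, ?_⟩
    rintro n ⟨J, hJX, hJ, rfl⟩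
    exact ncard_le_ncard hJ.subset_ground M.ground_finite
  exact le_csSup hbdd ⟨I, hIX, hI, rfl⟩

lemma rFun_eq_ncard_of_basis' (M : Matroid α) [M.Finite] (hI : M.IsBasis' I X) :
    M.rFun X = I.ncard := by
  refine le_antisymm (csSup_le ⟨0, ∅, empty_subset _, M.empty_indep, by simp⟩ ?_)
    (M.ncard_le_rFun hI.indep hI.subset)
  rintro n ⟨J, hJX, hJ, rfl⟩
  obtain ⟨K, hK, hJK⟩ := hJ.subset_isBasis'_of_subset hJX
  have h1 : J.ncard ≤ K.ncard :=
    ncard_le_ncard hJK (M.set_finite K hK.indep.subset_ground)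
  have h2 : K.ncard = I.ncard := by
    have := hK.encard_eq_encard hI
    rw [ncard_def, this, ← ncard_def]
  omega

lemma rFun_eq_ncard_of_basis (M : Matroid α) [M.Finite] (hI : M.IsBasis I X) :
    M.rFun X = I.ncard := M.rFun_eq_ncard_of_basis' hI.isBasis'

lemma rFun_submod (M : Matroid α) [M.Finite] (A B : Set α) :
    M.rFun (A ∩ B) + M.rFun (A ∪ B) ≤ M.rFun A + M.rFun B := by
  obtain ⟨I, hI⟩ := M.exists_isBasis' (A ∩ B)
  obtain ⟨J, hJ, hIJ⟩ := hI.indep.subset_isBasis'_of_subset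
    (hI.subset.trans (inter_subset_left.trans subset_union_left))
  have hJfin : J.Finite := M.set_finite J hJ.indep.subset_ground
  have hIeq : I = J ∩ (A ∩ B) :=
    hI.eq_of_subset_indep (hJ.indep.subset inter_subset_left)
      (subset_inter hIJ hI.subset) inter_subset_right
  have hcard : (J ∩ A ∩ (J ∩ B)).ncard + (J ∩ A ∪ J ∩ B).ncard
      = (J ∩ A).ncard + (J ∩ B).ncard :=
    ncard_inter_add_ncard_union _ _ (hJfin.subset inter_subset_left)
      (hJfin.subset inter_subset_left)
  have h1 : J ∩ A ∩ (J ∩ B) = I := by rw [hIeq]; ext x; simp; tauto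
  have h2 : J ∩ A ∪ J ∩ B = J := by
    rw [← inter_union_distrib_left, inter_eq_self_of_subset_left hJ.subset]
  rw [h1, h2] at hcard
  rw [M.rFun_eq_ncard_of_basis' hI, M.rFun_eq_ncard_of_basis' hJ, hcard]
  exact add_le_add (M.ncard_le_rFun (hJ.indep.subset inter_subset_left) inter_subset_right)
    (M.ncard_le_rFun (hJ.indep.subset inter_subset_left) inter_subset_right)

lemma rFun_dual_eq (M : Matroid α) [M.Finite] (hX : X ⊆ M.E) :
    (M✶.rFun X : ℤ) = X.ncard + M.rFun (M.E \ X) - M.rFun M.E := by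
  obtain ⟨J, hJ⟩ := M.exists_isBasis (M.E \ X) diff_subset
  obtain ⟨B, hB, hJB⟩ := hJ.indep.exists_isBase_superset
  have hXfin : X.Finite := M.set_finite X hX
  have hBfin : B.Finite := M.set_finite B hB.subset_ground
  have hJeq : J = B ∩ (M.E \ X) :=
    hJ.isBasis'.eq_of_subset_indep (hB.indep.subset inter_subset_left)
      (subset_inter hJB hJ.subset) inter_subset_right
  have hrE : M.rFun M.E = B.ncard := M.rFun_eq_ncard_of_basis hB.isBasis_ground
  have hrdX : M.rFun (M.E \ X) = J.ncard := M.rFun_eq_ncard_of_basis hJ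
  have hBsplit : B.ncard = (B ∩ X).ncard + J.ncard := by
    rw [hJeq, ← ncard_union_eq ?_ (hBfin.subset inter_subset_left)
      (hBfin.subset inter_subset_left)]
    · congr 1
      rw [← inter_union_distrib_left, union_diff_cancel hX,
        inter_eq_self_of_subset_left hB.subset_ground]
    · exact Disjoint.mono inter_subset_right inter_subset_right disjoint_sdiff_right
  have hXsplit : X.ncard = (B ∩ X).ncard + (X \ B).ncard := by
    rw [← ncard_union_eq ?_ (hXfin.subset inter_subset_right) (hXfin.subset diff_subset)]
    · rw [inter_comm, inter_union_diff]
    · exact Disjoint.mono_left inter_subset_left disjoint_sdiff_right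
  have hIindep : M✶.Indep (X \ B) := by
    rw [dual_indep_iff_exists']
    exact ⟨diff_subset.trans hX, B, hB, disjoint_sdiff_left⟩
  have hlow : (X \ B).ncard ≤ M✶.rFun X := M✶.ncard_le_rFun hIindep diff_subset
  obtain ⟨K, hK⟩ := M✶.exists_isBasis' X
  have hKcard : M✶.rFun X = K.ncard := M✶.rFun_eq_ncard_of_basis' hK
  obtain ⟨hKE, B', hB', hdisj⟩ := dual_indep_iff_exists'.1 hK.indep
  have hB'fin : B'.Finite := M.set_finite B' hB'.subset_ground
  have hB'card : B'.ncard = B.ncard := hB'.ncard_eq_ncard_of_isBase hB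
  have hB'split : B'.ncard = (B' ∩ X).ncard + (B' ∩ (M.E \ X)).ncard := by
    rw [← ncard_union_eq ?_ (hB'fin.subset inter_subset_left)
      (hB'fin.subset inter_subset_left)]
    · congr 1
      rw [← inter_union_distrib_left, union_diff_cancel hX,
        inter_eq_self_of_subset_left hB'.subset_ground]
    · exact Disjoint.mono inter_subset_right inter_subset_right disjoint_sdiff_right
  have hB'dX : (B' ∩ (M.E \ X)).ncard ≤ J.ncard := by
    have := M.ncard_le_rFun (hB'.indep.subset inter_subset_left)
      (inter_subset_right : B' ∩ (M.E \ X) ⊆ M.E \ X)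
    omega
  have hKX : K ⊆ X \ B' := subset_diff.2 ⟨hK.subset, hdisj⟩
  have hKle : K.ncard ≤ (X \ B').ncard := ncard_le_ncard hKX (hXfin.subset diff_subset)
  have hX'split : X.ncard = (B' ∩ X).ncard + (X \ B').ncard := by
    rw [← ncard_union_eq ?_ (hXfin.subset inter_subset_right) (hXfin.subset diff_subset)]
    · rw [inter_comm, inter_union_diff]
    · exact Disjoint.mono_left inter_subset_left disjoint_sdiff_right
  rw [hKcard, hrE, hrdX]
  omega

lemma conn_submod (M : Matroid α) [M.Finite] (A B : Set α) :
    M.conn (A ∩ B) + M.conn (A ∪ B) ≤ M.conn A + M.conn B := by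
  have h1 := M.rFun_submod A B
  have h2 := M.rFun_submod (M.E \ A) (M.E \ B)
  rw [diff_inter_diff, ← diff_inter] at h2
  unfold conn
  push_cast at h1 h2
  linarith

end Aux

theorem localConn_add_localCoconn_LR_le (M : Matroid α) [M.Finite] {n : ℕ}
    (hn : 2 ≤ n) (c : ℤ) (L R : Set α) (Q : Fin n → Set α)
    (h : Is4cFlexipath M c L R Q) :
    M.localConn L R + M.localCoconn L R ≤ 5 - c := by
  have hP : Is4Path M L R Q := by simpa using h.flexi (Equiv.refl _)
  set QU : Set α := ⋃ i, Q i with hQU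
  have hE : L ∪ QU ∪ R = M.E := hP.ground_eq
  have hLQU : Disjoint L QU := disjoint_iUnion_right.2 hP.disj_LQ
  have hRQU : Disjoint R QU := disjoint_iUnion_right.2 hP.disj_RQ
  have hLE : L ⊆ M.E := by rw [← hE]; exact subset_union_left.trans subset_union_left
  have hRE : R ⊆ M.E := by rw [← hE]; exact subset_union_right
  have hLRE : L ∪ R ⊆ M.E := union_subset hLE hRE
  have hER : M.E \ R = L ∪ QU := by
    rw [← hE]
    exact union_diff_cancel_right
      ((disjoint_union_left.2 ⟨hP.disj_LR, hRQU.symm⟩).inter_eq.le)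
  have hELR : M.E \ (L ∪ R) = QU := by
    rw [← hE]
    have : L ∪ QU ∪ R = QU ∪ (L ∪ R) := by ac_rfl
    rw [this]
    exact union_diff_cancel_right
      ((disjoint_union_right.2 ⟨hLQU.symm, hRQU.symm⟩).inter_eq.le)
  have hEQU : M.E \ QU = L ∪ R := by
    rw [← hELR, diff_diff_cancel_left hLRE]
  -- conn L = 3
  have hconnL : M.conn L = 3 := by simpa using hP.steps 0 (by omega)
  -- conn (E \ R) = 3
  have hunivQ : (⋃ i ∈ {i : Fin n | (i : ℕ) < n}, Q i) = QU := by
    have huniv : {i : Fin n | (i : ℕ) < n} = Set.univ :=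
      eq_univ_of_forall fun i => i.isLt
    rw [huniv, biUnion_univ]
  have hconnER : M.conn (L ∪ QU) = 3 := by
    have := hP.steps n le_rfl
    rwa [hunivQ] at this
  -- the two-step prefix
  set S2 : Set α := ⋃ i ∈ {i : Fin n | (i : ℕ) < 2}, Q i with hS2def
  have hconnS2pre : M.conn (L ∪ S2) = 3 := hP.steps 2 hn
  have hS2 : S2 = Q ⟨0, by omega⟩ ∪ Q ⟨1, by omega⟩ := by
    ext x
    simp only [hS2def, mem_iUnion, mem_setOf_eq, mem_union, exists_prop]
    constructor
    · rintro ⟨i, hi, hx⟩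
      have h01 : (i : ℕ) = 0 ∨ (i : ℕ) = 1 := by omega
      rcases h01 with h0 | h0
      · exact Or.inl (by rwa [show i = ⟨0, by omega⟩ from Fin.ext h0] at hx)
      · exact Or.inr (by rwa [show i = ⟨1, by omega⟩ from Fin.ext h0] at hx)
    · rintro (hx | hx)
      · exact ⟨⟨0, by omega⟩, by simp, hx⟩
      · exact ⟨⟨1, by omega⟩, by simp, hx⟩
  have hc2 : c < M.conn S2 := by
    rw [hS2]
    exact h.conn_two_steps _ _ (by simp [Fin.ext_iff])
  have hS2QU : S2 ⊆ QU := iUnion₂_subset fun i _ => subset_iUnion Q i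
  -- submodularity application
  have hsub := M.conn_submod (L ∪ S2) QU
  have hinter : (L ∪ S2) ∩ QU = S2 := by
    rw [union_inter_distrib_right, hLQU.inter_eq,
      inter_eq_self_of_subset_left hS2QU, empty_union]
  have hunion : (L ∪ S2) ∪ QU = L ∪ QU := by
    rw [union_assoc, union_eq_self_of_subset_left hS2QU]
  rw [hinter, hunion, hconnS2pre, hconnER] at hsub
  -- conn QU ≥ c + 1
  have hQUge : c + 1 ≤ M.conn QU := by linarith
  -- expand everything
  have hdualL := M.rFun_dual_eq hLE
  have hdualR := M.rFun_dual_eq hRE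
  have hdualLR := M.rFun_dual_eq hLRE
  have hfinL : L.Finite := M.set_finite L hLE
  have hfinR : R.Finite := M.set_finite R hRE
  have hncard : (L ∪ R).ncard = L.ncard + R.ncard :=
    ncard_union_eq hP.disj_LR hfinL hfinR
  have hRR : M.E \ (M.E \ R) = R := diff_diff_cancel_left hRE
  have hconnERR : M.conn (M.E \ R) = 3 := by rwa [hER]
  simp only [conn] at hconnL hconnERR hQUge
  rw [hRR, hELR] at *
  simp only [localConn, localCoconn, conn] at *
  rw [hdualL, hdualR, hdualLR, hEQU] at *
  linarith


end Matroid
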